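/- arXiv:1211.4140 — 2 statements merged into one kernel-verified Lean document; each statement's English description precedes it below -/
import Mathlib

section
/- Let G be a finite cyclic group and 0 → A → B → C → 0 a short exact sequence of G-modules for which the Herbrand quotients are defined. Then the Herbrand quotient is multiplicative: h(G,B) = h(G,A)·h(G,C), where h(G,M) = |H^2(G,M)|/|H^1(G,M)|. -/
open Finset

section TateCohomology

variable (G : Type*) [Group G] [Fintype G]
variable (M : Type*) [AddCommGroup M] [DistribMulAction G M]

/-- The norm (trace) map `m ↦ Σ_{σ ∈ G} σ • m`. -/
def normMap : M →+ M where
  toFun m := ∑ x : G, x • m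
  map_zero' := by simp
  map_add' a b := by simp [smul_add, Finset.sum_add_distrib]

variable {G}

/-- The map `m ↦ g • m - m`. -/
def augMap (g : G) : M →+ M :=
  DistribMulAction.toAddMonoidHom M g - AddMonoidHom.id M

/-- For a cyclic group `G` with generator `g`, the Tate cohomology group
`Ĥ²(G, M) = Ĥ⁰(G, M) = M^G / N_G M` (fixed points modulo norms). -/
def tateH2 (g : G) : Type _ :=
  (augMap M g).ker ⧸ ((normMap G M).range.addSubgroupOf (augMap M g).ker)

/-- For a cyclic group `G` with generator `g`, the Tate cohomology group
`Ĥ¹(G, M) = ker(N_G) / (g - 1)M`. -/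
def tateH1 (g : G) : Type _ :=
  (normMap G M).ker ⧸ ((augMap M g).range.addSubgroupOf (normMap G M).ker)

end TateCohomology

/-!
The sequence `0 → A → B → C → 0` induces a short exact sequence of the 2-periodic complexes
`⋯ → M --g-1--> M --N--> M --g-1--> ⋯`, whose homology groups are `Ĥ¹` and `Ĥ²`. The snake
lemma turns this into an exact hexagon
`Ĥ²A → Ĥ²B → Ĥ²C → Ĥ¹A → Ĥ¹B → Ĥ¹C → Ĥ²A`,
and in an exact cycle of groups the products of the orders at the even and at the odd places
agree, since each order is the product of the orders of an image and a kernel, and each image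
is the next kernel.
-/

section NormAug

variable {G : Type*} [Group G] {M N : Type*} [AddCommGroup M] [AddCommGroup N]
  [DistribMulAction G M] [DistribMulAction G N]

lemma augMap_normMap [Fintype G] (g : G) (m : M) : augMap M g (normMap G M m) = 0 := by
  change g • ∑ x : G, x • m - ∑ x : G, x • m = 0
  rw [Finset.smul_sum, sub_eq_zero]
  exact Fintype.sum_equiv (Equiv.mulLeft g) _ _ fun x => by simp [smul_smul]

lemma normMap_augMap [Fintype G] (g : G) (m : M) : normMap G M (augMap M g m) = 0 := by
  change ∑ x : G, x • (g • m - m) = 0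
  simp only [smul_sub, Finset.sum_sub_distrib, sub_eq_zero]
  exact Fintype.sum_equiv (Equiv.mulRight g) _ _ fun x => by simp [smul_smul]

lemma map_augMap (φ : M →+ N) (hφ : ∀ (σ : G) (m : M), φ (σ • m) = σ • φ m) (g : G) (m : M) :
    φ (augMap M g m) = augMap N g (φ m) := by
  change φ (g • m - m) = g • φ m - φ m
  rw [map_sub, hφ]

lemma map_normMap [Fintype G] (φ : M →+ N) (hφ : ∀ (σ : G) (m : M), φ (σ • m) = σ • φ m)
    (m : M) : φ (normMap G M m) = normMap G N (φ m) := by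
  change φ (∑ x : G, x • m) = ∑ x : G, x • φ m
  simp only [map_sum, hφ]

end NormAug

section ExactHexagon

lemma AddMonoidHom.card_eq_card_range_mul_card_ker {X Y : Type*} [AddGroup X] [AddGroup Y]
    (φ : X →+ Y) : Nat.card X = Nat.card φ.range * Nat.card φ.ker := by
  rw [AddSubgroup.card_eq_card_quotient_mul_card_addSubgroup φ.ker,
    Nat.card_congr (QuotientAddGroup.quotientKerEquivRange φ).toEquiv]

theorem card_mul_card_mul_card_eq_of_exact_hexagon
    {G₁ G₂ G₃ G₄ G₅ G₆ : Type*} [AddGroup G₁] [AddGroup G₂] [AddGroup G₃] [AddGroup G₄]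
    [AddGroup G₅] [AddGroup G₆] {m₁ : G₁ →+ G₂} {m₂ : G₂ →+ G₃} {m₃ : G₃ →+ G₄}
    {m₄ : G₄ →+ G₅} {m₅ : G₅ →+ G₆} {m₆ : G₆ →+ G₁}
    (e₁ : m₁.range = m₂.ker) (e₂ : m₂.range = m₃.ker) (e₃ : m₃.range = m₄.ker)
    (e₄ : m₄.range = m₅.ker) (e₅ : m₅.range = m₆.ker) (e₆ : m₆.range = m₁.ker) :
    Nat.card G₂ * (Nat.card G₄ * Nat.card G₆) = Nat.card G₅ * (Nat.card G₁ * Nat.card G₃) := by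
  simp only [AddMonoidHom.card_eq_card_range_mul_card_ker m₁,
    AddMonoidHom.card_eq_card_range_mul_card_ker m₂,
    AddMonoidHom.card_eq_card_range_mul_card_ker m₃,
    AddMonoidHom.card_eq_card_range_mul_card_ker m₄,
    AddMonoidHom.card_eq_card_range_mul_card_ker m₅,
    AddMonoidHom.card_eq_card_range_mul_card_ker m₆, e₁, e₂, e₃, e₄, e₅, e₆]
  ring

end ExactHexagon

section KerModRange

variable {M : Type*} [AddCommGroup M]

abbrev KerModRange (d n : M →+ M) : Type _ :=
  d.ker ⧸ n.range.addSubgroupOf d.ker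

variable {A B : Type*} [AddCommGroup A] [AddCommGroup B]

def mapKer (f : A →+ B) {dA : A →+ A} {dB : B →+ B} (hd : ∀ a, f (dA a) = dB (f a)) :
    dA.ker →+ dB.ker :=
  (f.comp dA.ker.subtype).codRestrict dB.ker fun x => by
    simp [AddMonoidHom.mem_ker, ← hd, AddMonoidHom.mem_ker.mp x.2]

@[simp] lemma coe_mapKer (f : A →+ B) {dA : A →+ A} {dB : B →+ B}
    (hd : ∀ a, f (dA a) = dB (f a)) (x : dA.ker) : (mapKer f hd x : B) = f x := rfl

def mapKerModRange (f : A →+ B) {dA nA : A →+ A} {dB nB : B →+ B}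
    (hd : ∀ a, f (dA a) = dB (f a)) (hn : ∀ a, f (nA a) = nB (f a)) :
    KerModRange dA nA →+ KerModRange dB nB :=
  QuotientAddGroup.map _ _ (mapKer f hd) fun x hx => by
    obtain ⟨a, ha⟩ := AddSubgroup.mem_addSubgroupOf.mp hx
    exact ⟨f a, by rw [← hn, ha]; rfl⟩

@[simp] lemma mapKerModRange_mk (f : A →+ B) {dA nA : A →+ A} {dB nB : B →+ B}
    (hd : ∀ a, f (dA a) = dB (f a)) (hn : ∀ a, f (nA a) = nB (f a)) (x : dA.ker) :
    mapKerModRange f hd hn (QuotientAddGroup.mk x) = QuotientAddGroup.mk (mapKer f hd x) := rfl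

end KerModRange

/-- A short exact sequence `0 → A → B → C → 0` of 2-periodic complexes
`⋯ → X --nX--> X --dX--> X --nX--> ⋯`. -/
structure PeriodicSES (A B C : Type*) [AddCommGroup A] [AddCommGroup B] [AddCommGroup C] where
  f : A →+ B
  q : B →+ C
  dA : A →+ A
  nA : A →+ A
  dB : B →+ B
  nB : B →+ B
  dC : C →+ C
  nC : C →+ C
  injective_f : Function.Injective f
  surjective_q : Function.Surjective q
  range_f : f.range = q.ker
  f_dA : ∀ a, f (dA a) = dB (f a)
  f_nA : ∀ a, f (nA a) = nB (f a)
  q_dB : ∀ b, q (dB b) = dC (q b)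
  q_nB : ∀ b, q (nB b) = nC (q b)
  dB_nB : ∀ b, dB (nB b) = 0
  nB_dB : ∀ b, nB (dB b) = 0

namespace PeriodicSES

variable {A B C : Type*} [AddCommGroup A] [AddCommGroup B] [AddCommGroup C]
  (E : PeriodicSES A B C)

def swap : PeriodicSES A B C where
  f := E.f
  q := E.q
  dA := E.nA
  nA := E.dA
  dB := E.nB
  nB := E.dB
  dC := E.nC
  nC := E.dC
  injective_f := E.injective_f
  surjective_q := E.surjective_q
  range_f := E.range_f
  f_dA := E.f_nA
  f_nA := E.f_dA
  q_dB := E.q_nB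
  q_nB := E.q_dB
  dB_nB := E.nB_dB
  nB_dB := E.dB_nB

lemma q_f (a : A) : E.q (E.f a) = 0 := by
  rw [← AddMonoidHom.mem_ker, ← E.range_f]
  exact ⟨a, rfl⟩

lemma exists_f_eq_of_q_eq_zero {b : B} (hb : E.q b = 0) : ∃ a, E.f a = b := by
  rwa [← AddMonoidHom.mem_ker, ← E.range_f] at hb

lemma exists_lift (c : E.dC.ker) : ∃ b a, E.q b = c ∧ E.f a = E.dB b := by
  obtain ⟨b, hb⟩ := E.surjective_q c
  obtain ⟨a, ha⟩ := E.exists_f_eq_of_q_eq_zero (b := E.dB b) (by rw [E.q_dB, hb]; exact c.2)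
  exact ⟨b, a, hb, ha⟩

lemma mem_ker_nA_of_f_eq_dB {a : A} {b : B} (ha : E.f a = E.dB b) : a ∈ E.nA.ker :=
  E.injective_f (by rw [E.f_nA, ha, E.nB_dB, map_zero])

lemma sub_mem_range_dA {a a' : A} {b b' : B} (hb : E.q b = E.q b') (ha : E.f a = E.dB b)
    (ha' : E.f a' = E.dB b') : a' - a ∈ E.dA.range := by
  obtain ⟨a₀, h₀⟩ := E.exists_f_eq_of_q_eq_zero (b := b' - b) (by rw [map_sub, hb, sub_self])
  exact ⟨a₀, E.injective_f (by rw [E.f_dA, h₀, map_sub, map_sub, ha, ha'])⟩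

noncomputable def connectingFun (c : E.dC.ker) : KerModRange E.nA E.dA :=
  QuotientAddGroup.mk ⟨(E.exists_lift c).choose_spec.choose,
    E.mem_ker_nA_of_f_eq_dB (E.exists_lift c).choose_spec.choose_spec.2⟩

lemma connectingFun_eq {c : E.dC.ker} {b : B} {a : A} (hb : E.q b = c) (ha : E.f a = E.dB b) :
    E.connectingFun c = QuotientAddGroup.mk ⟨a, E.mem_ker_nA_of_f_eq_dB ha⟩ := by
  obtain ⟨hb', ha'⟩ := (E.exists_lift c).choose_spec.choose_spec
  rw [connectingFun, QuotientAddGroup.eq, AddSubgroup.mem_addSubgroupOf]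
  simpa [neg_add_eq_sub] using E.sub_mem_range_dA (hb'.trans hb.symm) ha' ha

noncomputable def connecting : KerModRange E.dC E.nC →+ KerModRange E.nA E.dA :=
  QuotientAddGroup.lift _
    (AddMonoidHom.mk' E.connectingFun fun c c' => by
      obtain ⟨b, a, hb, ha⟩ := E.exists_lift c
      obtain ⟨b', a', hb', ha'⟩ := E.exists_lift c'
      rw [E.connectingFun_eq hb ha, E.connectingFun_eq hb' ha',
        E.connectingFun_eq (b := b + b') (a := a + a') (by simp [hb, hb']) (by simp [ha, ha'])]
      rfl)
    fun c hc => by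
      obtain ⟨c₀, hc₀⟩ := AddSubgroup.mem_addSubgroupOf.mp hc
      obtain ⟨b₀, rfl⟩ := E.surjective_q c₀
      exact E.connectingFun_eq (b := E.nB b₀) (a := 0) (by rw [E.q_nB, hc₀])
        (by rw [map_zero, E.dB_nB])

@[simp] lemma connecting_mk (c : E.dC.ker) :
    E.connecting (QuotientAddGroup.mk c) = E.connectingFun c := rfl

def mapF : KerModRange E.dA E.nA →+ KerModRange E.dB E.nB :=
  mapKerModRange E.f E.f_dA E.f_nA

def mapQ : KerModRange E.dB E.nB →+ KerModRange E.dC E.nC :=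
  mapKerModRange E.q E.q_dB E.q_nB

lemma range_mapF_le_ker_mapQ : E.mapF.range ≤ E.mapQ.ker := by
  rintro _ ⟨x, rfl⟩
  induction x using QuotientAddGroup.induction_on with | H a => ?_
  have h : mapKer E.q E.q_dB (mapKer E.f E.f_dA a) = 0 := Subtype.ext (E.q_f a)
  simp only [AddMonoidHom.mem_ker, mapF, mapQ, mapKerModRange_mk, h, QuotientAddGroup.mk_zero]

lemma ker_mapQ_le_range_mapF : E.mapQ.ker ≤ E.mapF.range := by
  intro x hx
  induction x using QuotientAddGroup.induction_on with | H b => ?_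
  obtain ⟨c, hc⟩ := AddSubgroup.mem_addSubgroupOf.mp ((QuotientAddGroup.eq_zero_iff _).mp hx)
  obtain ⟨b₀, rfl⟩ := E.surjective_q c
  obtain ⟨a, ha⟩ := E.exists_f_eq_of_q_eq_zero (b := b - E.nB b₀)
    (by rw [map_sub, E.q_nB, hc, coe_mapKer, sub_self])
  have ha_ker : a ∈ E.dA.ker :=
    E.injective_f (by rw [E.f_dA, ha, map_sub, E.dB_nB, sub_zero, b.2, map_zero])
  refine ⟨QuotientAddGroup.mk ⟨a, ha_ker⟩, QuotientAddGroup.eq.mpr ⟨b₀, ?_⟩⟩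
  simp [ha]

lemma range_mapQ_le_ker_connecting : E.mapQ.range ≤ E.connecting.ker := by
  rintro _ ⟨x, rfl⟩
  exact QuotientAddGroup.induction_on x fun b =>
    E.connectingFun_eq (b := b) (a := 0) rfl (by rw [map_zero, b.2])

lemma ker_connecting_le_range_mapQ : E.connecting.ker ≤ E.mapQ.range := by
  intro x hx
  induction x using QuotientAddGroup.induction_on with | H c => ?_
  obtain ⟨b, a, hb, ha⟩ := E.exists_lift c
  rw [AddMonoidHom.mem_ker, connecting_mk, E.connectingFun_eq hb ha,
    QuotientAddGroup.eq_zero_iff, AddSubgroup.mem_addSubgroupOf] at hx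
  obtain ⟨a₀, ha₀⟩ := hx
  have hb_ker : b - E.f a₀ ∈ E.dB.ker := by
    rw [AddMonoidHom.mem_ker, map_sub, ← E.f_dA, ha₀, ← ha, sub_self]
  refine ⟨QuotientAddGroup.mk ⟨b - E.f a₀, hb_ker⟩, congrArg _ (Subtype.ext ?_)⟩
  rw [coe_mapKer, map_sub, E.q_f, sub_zero, hb]

lemma range_connecting_le_ker_mapF_swap : E.connecting.range ≤ E.swap.mapF.ker := by
  rintro _ ⟨x, rfl⟩
  induction x using QuotientAddGroup.induction_on with | H c => ?_
  obtain ⟨b, a, hb, ha⟩ := E.exists_lift c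
  rw [connecting_mk, E.connectingFun_eq hb ha]
  exact (QuotientAddGroup.eq_zero_iff _).mpr ⟨b, ha.symm⟩

lemma ker_mapF_swap_le_range_connecting : E.swap.mapF.ker ≤ E.connecting.range := by
  intro x hx
  induction x using QuotientAddGroup.induction_on with | H a => ?_
  obtain ⟨b, hb⟩ := AddSubgroup.mem_addSubgroupOf.mp ((QuotientAddGroup.eq_zero_iff _).mp hx)
  have hb : E.f a = E.dB b := hb.symm
  have hc_ker : E.q b ∈ E.dC.ker := by
    rw [AddMonoidHom.mem_ker, ← E.q_dB, ← hb, E.q_f]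
  exact ⟨QuotientAddGroup.mk ⟨E.q b, hc_ker⟩, E.connectingFun_eq rfl hb⟩

theorem card_mul_card_mul_card :
    Nat.card (KerModRange E.dB E.nB) *
        (Nat.card (KerModRange E.nA E.dA) * Nat.card (KerModRange E.nC E.dC)) =
      Nat.card (KerModRange E.nB E.dB) *
        (Nat.card (KerModRange E.dA E.nA) * Nat.card (KerModRange E.dC E.nC)) :=
  card_mul_card_mul_card_eq_of_exact_hexagon
    (le_antisymm E.range_mapF_le_ker_mapQ E.ker_mapQ_le_range_mapF)
    (le_antisymm E.range_mapQ_le_ker_connecting E.ker_connecting_le_range_mapQ)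
    (le_antisymm E.range_connecting_le_ker_mapF_swap E.ker_mapF_swap_le_range_connecting)
    (le_antisymm E.swap.range_mapF_le_ker_mapQ E.swap.ker_mapQ_le_range_mapF)
    (le_antisymm E.swap.range_mapQ_le_ker_connecting E.swap.ker_connecting_le_range_mapQ)
    (le_antisymm E.swap.range_connecting_le_ker_mapF_swap
      E.swap.ker_mapF_swap_le_range_connecting)

end PeriodicSES

theorem stmt1_general (G : Type*) [Group G] [Fintype G] (g : G)
    (A B C : Type*) [AddCommGroup A] [AddCommGroup B] [AddCommGroup C]
    [DistribMulAction G A] [DistribMulAction G B] [DistribMulAction G C]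
    (f : A →+ B) (q : B →+ C)
    (hf : ∀ (σ : G) (a : A), f (σ • a) = σ • f a)
    (hq : ∀ (σ : G) (b : B), q (σ • b) = σ • q b)
    (hinj : Function.Injective f) (hsurj : Function.Surjective q)
    (hex : f.range = q.ker) :
    Nat.card (tateH2 B g) * (Nat.card (tateH1 A g) * Nat.card (tateH1 C g))
      = Nat.card (tateH1 B g) * (Nat.card (tateH2 A g) * Nat.card (tateH2 C g)) :=
  PeriodicSES.card_mul_card_mul_card
    { f, q
      dA := augMap A g
      nA := normMap G A
      dB := augMap B g
      nB := normMap G B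
      dC := augMap C g
      nC := normMap G C
      injective_f := hinj
      surjective_q := hsurj
      range_f := hex
      f_dA := map_augMap f hf g
      f_nA := map_normMap f hf
      q_dB := map_augMap q hq g
      q_nB := map_normMap q hq
      dB_nB := augMap_normMap g
      nB_dB := normMap_augMap g }

/-- Multiplicativity of the Herbrand quotient on short exact sequences of modules over a
finite cyclic group: `h(G,B) = h(G,A)·h(G,C)` where `h(G,M) = |Ĥ²(G,M)|/|Ĥ¹(G,M)|`. -/
theorem stmt1 (G : Type*) [Group G] [Fintype G] (g : G)
    (hg : ∀ x : G, x ∈ Subgroup.zpowers g)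
    (A B C : Type*) [AddCommGroup A] [AddCommGroup B] [AddCommGroup C]
    [DistribMulAction G A] [DistribMulAction G B] [DistribMulAction G C]
    (f : A →+ B) (q : B →+ C)
    (hf : ∀ (σ : G) (a : A), f (σ • a) = σ • f a)
    (hq : ∀ (σ : G) (b : B), q (σ • b) = σ • q b)
    (hinj : Function.Injective f) (hsurj : Function.Surjective q)
    (hex : f.range = q.ker)
    (h1A : Finite (tateH1 A g)) (h2A : Finite (tateH2 A g))
    (h1C : Finite (tateH1 C g)) (h2C : Finite (tateH2 C g)) :
    Nat.card (tateH2 B g) * (Nat.card (tateH1 A g) * Nat.card (tateH1 C g))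
      = Nat.card (tateH1 B g) * (Nat.card (tateH2 A g) * Nat.card (tateH2 C g)) :=
  stmt1_general G g A B C f q hf hq hinj hsurj hex
end

section
/- Let G = ⟨g⟩ ≅ Z/(p^n), and give Z_p[ζ_{p^n}] the G-module structure where g acts as multiplication by ζ_{p^n}. For a subgroup N_i = ⟨g^{p^i}⟩ with 0 ≤ i < n, we have H^2(N_i, Z_p[ζ_{p^n}]) = 0 and H^1(N_i, Z_p[ζ_{p^n}]) ≅ Z_p[ζ_{p^n}]/((ζ_{p^n}^{p^i} - 1)) has order p^{p^i}. Consequently χ(N_i, Z_p[ζ_{p^n}]) = -p^i. -/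
open Finset Polynomial

set_option synthInstance.maxHeartbeats 1000000
set_option maxHeartbeats 1000000

/-- The cyclic group `Z/(p^n)`, written multiplicatively, with canonical generator. -/
abbrev Cyc (p n : ℕ) := Multiplicative (ZMod (p ^ n))

/-- The canonical generator `g` of `Z/(p^n)`. -/
def cycGen (p n : ℕ) : Cyc p n := Multiplicative.ofAdd 1

/-- The group ring `ℤ_p[Z/(p^n)]`. -/
abbrev ZpG (p n : ℕ) [Fact p.Prime] := MonoidAlgebra ℤ_[p] (Cyc p n)

/-- The image of the generator `g` in the group ring. -/
noncomputable def genElt (p n : ℕ) [Fact p.Prime] : ZpG p n :=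
  MonoidAlgebra.of ℤ_[p] (Cyc p n) (cycGen p n)

/-- `ℤ_p[ζ_{p^i}]` realized as `ℤ_pG/(Φ_{p^i}(g))`. -/
noncomputable abbrev ZpZeta (p n i : ℕ) [Fact p.Prime] : Type _ :=
  ZpG p n ⧸ Ideal.span {Polynomial.aeval (genElt p n) (Polynomial.cyclotomic (p ^ i) ℤ_[p])}

section ElementwiseTate

variable (R : Type*) [CommRing R] (M : Type*) [AddCommGroup M] [Module R M]

/-- For the cyclic group generated by (the action of) `a` of order `k`, the Tate
cohomology group `Ĥ² = Ĥ⁰ = ker(a-1)/im(N)` where `N = 1 + a + ⋯ + a^{k-1}`. -/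
@[reducible] noncomputable def H2el (a : R) (k : ℕ) : Type _ :=
  LinearMap.ker (LinearMap.lsmul R M (a - 1)) ⧸
    Submodule.comap (LinearMap.ker (LinearMap.lsmul R M (a - 1))).subtype
      (LinearMap.range (LinearMap.lsmul R M (∑ j ∈ range k, a ^ j)))

/-- For the cyclic group generated by (the action of) `a` of order `k`, the Tate
cohomology group `Ĥ¹ = ker(N)/im(a-1)` where `N = 1 + a + ⋯ + a^{k-1}`. -/
@[reducible] noncomputable def H1el (a : R) (k : ℕ) : Type _ :=
  LinearMap.ker (LinearMap.lsmul R M (∑ j ∈ range k, a ^ j)) ⧸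
    Submodule.comap (LinearMap.ker (LinearMap.lsmul R M (∑ j ∈ range k, a ^ j))).subtype
      (LinearMap.range (LinearMap.lsmul R M (a - 1)))

/-- The `p`-adic Euler characteristic `χ = ord_p(|Ĥ²|/|Ĥ¹|)`. -/
noncomputable def chiEl (p : ℕ) (a : R) (k : ℕ) : ℤ :=
  (padicValNat p (Nat.card (H2el R M a k)) : ℤ) - (padicValNat p (Nat.card (H1el R M a k)) : ℤ)

end ElementwiseTate

/-! Write `ζ` for the image of `g` in `M = ℤ_p[G]/(Φ_{p^n}(g)) ≅ ℤ_p[X]/(Φ_{p^n})` and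
`a = g^{p^i}`. Since `Φ_{p^n}` is monic and coprime to `X^{p^i} - 1` over `ℚ_p`, the element
`ζ^{p^i} - 1` is a nonzerodivisor of `M`; as `(a - 1) N = a^{p^{n-i}} - 1 = 0`, the norm `N` then
kills `M`. Hence `Ĥ² = ker(a - 1)/NM = 0` and `Ĥ¹ = M/(a - 1)M = M/(ζ^{p^i} - 1)`. Finally
`Φ_{p^n} ≡ p` modulo `X^{p^i} - 1`, so `M/(ζ^{p^i} - 1) ≅ ℤ_p[X]/(p, X^{p^i} - 1)
≅ 𝔽_p[X]/(X^{p^i} - 1)`, which has `p^{p^i}` elements. -/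

section CyclicTate

variable {R : Type*} [CommRing R] {M : Type*} [AddCommGroup M] [Module R M] {a : R} {k : ℕ}

theorem sum_pow_smul_eq_zero_of_isSMulRegular (hak : a ^ k = 1) (hreg : IsSMulRegular M (a - 1))
    (x : M) : (∑ j ∈ range k, a ^ j) • x = 0 :=
  hreg <| show (a - 1) • _ = (a - 1) • 0 by
    rw [smul_zero, smul_smul, mul_geom_sum, hak, sub_self, zero_smul]

theorem subsingleton_H2el_of_isSMulRegular (hreg : IsSMulRegular M (a - 1)) :
    Subsingleton (H2el R M a k) := by
  have : Subsingleton (LinearMap.ker (LinearMap.lsmul R M (a - 1))) := by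
    rw [(isSMulRegular_iff_ker_lsmul_eq_bot M (a - 1)).1 hreg]
    infer_instance
  infer_instance

noncomputable def H1elEquivQuotRange (hak : a ^ k = 1) (hreg : IsSMulRegular M (a - 1)) :
    H1el R M a k ≃ₗ[R] M ⧸ LinearMap.range (LinearMap.lsmul R M (a - 1)) :=
  have hker : LinearMap.ker (LinearMap.lsmul R M (∑ j ∈ range k, a ^ j)) = ⊤ :=
    LinearMap.ker_eq_top.2 <| LinearMap.ext <| sum_pow_smul_eq_zero_of_isSMulRegular hak hreg
  Submodule.Quotient.equiv _ _ (LinearEquiv.ofTop _ hker) <| by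
    ext x
    exact ⟨fun ⟨y, hy, hyx⟩ => hyx ▸ hy, fun hx => ⟨⟨x, hker ▸ trivial⟩, hx, rfl⟩⟩

theorem LinearMap.range_lsmul_eq_restrictScalars_span {S : Type*} [CommRing S] [Algebra R S]
    (r : R) :
    LinearMap.range (LinearMap.lsmul R S r) =
      (Ideal.span {algebraMap R S r}).restrictScalars R := by
  ext x
  simp [Ideal.mem_span_singleton', Algebra.smul_def, mul_comm]

noncomputable def H1elEquivQuotSpan {S : Type*} [CommRing S] [Algebra R S] (hak : a ^ k = 1)
    (hreg : IsSMulRegular S (a - 1)) :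
    H1el R S a k ≃ₗ[R] S ⧸ Ideal.span {algebraMap R S (a - 1)} :=
  (H1elEquivQuotRange hak hreg).trans <|
    (Submodule.quotEquivOfEq _ _ (LinearMap.range_lsmul_eq_restrictScalars_span _)).trans <|
      Submodule.Quotient.restrictScalarsEquiv R _

end CyclicTate

section CyclicGroupAlgebra

variable {N : ℕ} {R : Type*} [CommRing R]

theorem AdjoinRoot.root_pow_eq_one {f : R[X]} (hf : f ∣ X ^ N - 1) : root f ^ N = 1 := by
  rw [← sub_eq_zero, ← mk_X, ← map_pow, ← map_one (mk f), ← map_sub, mk_eq_zero]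
  exact hf

variable [NeZero N]

@[simps]
def zmodMulHomOfPowEqOne {A : Type*} [Monoid A] (u : A) (hu : u ^ N = 1) :
    Multiplicative (ZMod N) →* A where
  toFun x := u ^ (Multiplicative.toAdd x).val
  map_one' := by simp
  map_mul' x y := by
    rw [toAdd_mul, ZMod.val_add, ← pow_eq_pow_mod _ hu, pow_add]

theorem zmodMulHomOfPowEqOne_ofAdd_one {A : Type*} [Monoid A] (u : A) (hu : u ^ N = 1) :
    zmodMulHomOfPowEqOne u hu (Multiplicative.ofAdd 1) = u := by
  rw [zmodMulHomOfPowEqOne_apply, toAdd_ofAdd, ZMod.val_one_eq_one_mod, ← pow_eq_pow_mod _ hu,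
    pow_one]

theorem Multiplicative.ofAdd_one_pow_val (x : Multiplicative (ZMod N)) :
    Multiplicative.ofAdd (1 : ZMod N) ^ (Multiplicative.toAdd x).val = x := by
  rw [← ofAdd_nsmul, nsmul_one, ZMod.natCast_zmod_val, ofAdd_toAdd]

local notation "γ" => MonoidAlgebra.of R (Multiplicative (ZMod N)) (Multiplicative.ofAdd 1)

noncomputable def groupAlgebraQuotEquivAdjoinRoot (f : R[X]) (hf : f ∣ X ^ N - 1) :
    (MonoidAlgebra R (Multiplicative (ZMod N)) ⧸ Ideal.span {aeval γ f}) ≃ₐ[R] AdjoinRoot f :=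
  let χ := zmodMulHomOfPowEqOne _ (AdjoinRoot.root_pow_eq_one hf)
  have hχ : MonoidAlgebra.lift R _ _ χ γ = AdjoinRoot.root f := by
    rw [MonoidAlgebra.lift_of, zmodMulHomOfPowEqOne_ofAdd_one]
  AlgEquiv.ofAlgHom
    (Ideal.Quotient.liftₐ _ (MonoidAlgebra.lift R _ _ χ) fun x hx => by
      obtain ⟨c, rfl⟩ := Ideal.mem_span_singleton'.1 hx
      rw [map_mul, ← aeval_algHom_apply, hχ, AdjoinRoot.aeval_eq, AdjoinRoot.mk_self, mul_zero])
    (AdjoinRoot.liftAlgHom f (Algebra.ofId R _) (Ideal.Quotient.mk _ γ) <| by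
      rw [Algebra.toRingHom_ofId, ← aeval_def, ← Ideal.Quotient.mkₐ_eq_mk R,
        aeval_algHom_apply (Ideal.Quotient.mkₐ R _) γ]
      exact Ideal.Quotient.eq_zero_iff_mem.2 (Ideal.subset_span rfl))
    (AdjoinRoot.algHom_ext <| by
      simp only [AlgHom.comp_apply, AdjoinRoot.liftAlgHom_root, AlgHom.id_apply]
      exact hχ)
    (Ideal.Quotient.algHom_ext _ <| MonoidAlgebra.algHom_ext (fun x => by
      have hx : MonoidAlgebra.single x (1 : R) = γ ^ (Multiplicative.toAdd x).val := by
        rw [← map_pow, Multiplicative.ofAdd_one_pow_val]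
        rfl
      rw [AlgHom.comp_assoc, Ideal.Quotient.liftₐ_comp, AlgHom.comp_apply, AlgHom.id_comp, hx,
        map_pow, map_pow, hχ, AdjoinRoot.liftAlgHom_root, map_pow, Ideal.Quotient.mkₐ_eq_mk])
      (Subsingleton.elim _ _))

theorem groupAlgebraQuotEquivAdjoinRoot_mk_of (f : R[X]) (hf : f ∣ X ^ N - 1) :
    groupAlgebraQuotEquivAdjoinRoot f hf (Ideal.Quotient.mk _ γ) = AdjoinRoot.root f := by
  rw [groupAlgebraQuotEquivAdjoinRoot, AlgEquiv.ofAlgHom_apply, ← Ideal.Quotient.mkₐ_eq_mk R,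
    ← AlgHom.comp_apply, Ideal.Quotient.liftₐ_comp, MonoidAlgebra.lift_of,
    zmodMulHomOfPowEqOne_ofAdd_one]

end CyclicGroupAlgebra

section CyclotomicPrimePow

variable {p : ℕ} [hp : Fact p.Prime] {m i : ℕ}

theorem X_pow_sub_one_dvd_cyclotomic_prime_pow_sub_natCast (R : Type*) [CommRing R] (hi : i ≤ m) :
    (X ^ p ^ i - 1 : R[X]) ∣ cyclotomic (p ^ (m + 1)) R - p := by
  have hp_sum : (p : R[X]) = ∑ _j ∈ range p, 1 := by simp
  rw [cyclotomic_prime_pow_eq_geom_sum hp.out, hp_sum, ← sum_sub_distrib]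
  exact dvd_sum fun j _ =>
    (dvd_pow_sub_one_of_dvd (pow_dvd_pow p hi)).trans (sub_one_dvd_pow_sub_one _ j)

theorem isCoprime_cyclotomic_prime_pow_X_pow_sub_one {K : Type*} [Field K] (hpK : (p : K) ≠ 0)
    (hi : i ≤ m) : IsCoprime (cyclotomic (p ^ (m + 1)) K) (X ^ p ^ i - 1) := by
  have hsep : (X ^ p ^ (m + 1) - 1 : K[X]).Separable := by
    simpa using separable_X_pow_sub_C (1 : K) (by simpa using pow_ne_zero (m + 1) hpK) one_ne_zero
  rw [← cyclotomic_prime_pow_mul_X_pow_sub_one] at hsep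
  exact hsep.isCoprime.of_isCoprime_of_dvd_right (dvd_pow_sub_one_of_dvd (pow_dvd_pow p hi))

theorem cyclotomic_prime_pow_dvd_of_dvd_X_pow_sub_one_mul {R : Type*} [CommRing R] [IsDomain R]
    [CharZero R] (hi : i ≤ m) {h : R[X]}
    (hdvd : cyclotomic (p ^ (m + 1)) R ∣ (X ^ p ^ i - 1) * h) : cyclotomic (p ^ (m + 1)) R ∣ h := by
  let K := FractionRing R
  have hinj := IsFractionRing.injective R K
  have hpK : (p : K) ≠ 0 := by
    rw [← map_natCast (algebraMap R K)]
    exact (map_ne_zero_iff _ hinj).2 (Nat.cast_ne_zero.2 hp.out.ne_zero)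
  rw [← map_dvd_map (algebraMap R K) hinj (cyclotomic.monic _ R), map_cyclotomic]
  have hdvdK := Polynomial.map_dvd (algebraMap R K) hdvd
  rw [Polynomial.map_mul, map_cyclotomic] at hdvdK
  exact (isCoprime_cyclotomic_prime_pow_X_pow_sub_one hpK hi).dvd_of_dvd_mul_left
    (by simpa using hdvdK)

theorem isSMulRegular_root_pow_sub_one {R : Type*} [CommRing R] [IsDomain R] [CharZero R]
    (hi : i ≤ m) :
    IsSMulRegular (AdjoinRoot (cyclotomic (p ^ (m + 1)) R))
      (AdjoinRoot.root (cyclotomic (p ^ (m + 1)) R) ^ p ^ i - 1) := by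
  refine isSMulRegular_iff_right_eq_zero_of_smul.2 fun x hx => ?_
  induction x using AdjoinRoot.induction_on with | ih h => ?_
  rw [smul_eq_mul, ← AdjoinRoot.mk_X, ← map_pow, ← map_one (AdjoinRoot.mk _), ← map_sub, ← map_mul,
    AdjoinRoot.mk_eq_zero] at hx
  exact AdjoinRoot.mk_eq_zero.2 (cyclotomic_prime_pow_dvd_of_dvd_X_pow_sub_one_mul hi hx)

end CyclotomicPrimePow

namespace AdjoinRoot

variable {R : Type*} [CommRing R]

theorem natCard_eq_pow_natDegree {g : R[X]} (hg : g.Monic) :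
    Nat.card (AdjoinRoot g) = Nat.card R ^ g.natDegree := by
  rw [Nat.card_congr (powerBasis' hg).basis.equivFun.toEquiv, Nat.card_fun, Nat.card_fin]
  rfl

theorem span_mk_eq_map_span (f g : R[X]) :
    Ideal.span {mk f g} = (Ideal.span {g}).map (mk f) := by
  rw [Ideal.map_span, Set.image_singleton]

noncomputable def quotSpanMkEquivComm (f g : R[X]) :
    AdjoinRoot f ⧸ Ideal.span {mk f g} ≃+* AdjoinRoot g ⧸ Ideal.span {mk g f} :=
  ((Ideal.quotEquivOfEq (span_mk_eq_map_span f g)).trans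
    (DoubleQuot.quotQuotEquivComm (Ideal.span {f}) (Ideal.span {g}))).trans
      (Ideal.quotEquivOfEq (span_mk_eq_map_span g f)).symm

end AdjoinRoot

theorem PadicInt.natCard_residueField (p : ℕ) [Fact p.Prime] :
    Nat.card (IsLocalRing.ResidueField ℤ_[p]) = p := by
  rw [Nat.card_congr PadicInt.residueField.toEquiv, Nat.card_zmod]

theorem natCard_quot_span_root_pow_sub_one {p : ℕ} [Fact p.Prime] {m i : ℕ} (hi : i ≤ m) :
    Nat.card (AdjoinRoot (cyclotomic (p ^ (m + 1)) ℤ_[p]) ⧸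
      Ideal.span {AdjoinRoot.root (cyclotomic (p ^ (m + 1)) ℤ_[p]) ^ p ^ i - 1}) = p ^ p ^ i := by
  set f : ℤ_[p][X] := X ^ p ^ i - 1
  have hroot :
      AdjoinRoot.root (cyclotomic (p ^ (m + 1)) ℤ_[p]) ^ p ^ i - 1 = AdjoinRoot.mk _ f := by
    simp [f]
  have hΦ : AdjoinRoot.mk f (cyclotomic (p ^ (m + 1)) ℤ_[p]) = AdjoinRoot.of f p := by
    rw [map_natCast, ← map_natCast (AdjoinRoot.mk f), ← sub_eq_zero, ← map_sub,
      AdjoinRoot.mk_eq_zero]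
    exact X_pow_sub_one_dvd_cyclotomic_prime_pow_sub_natCast _ hi
  have hspan : Ideal.span {AdjoinRoot.mk f (cyclotomic (p ^ (m + 1)) ℤ_[p])} =
      (IsLocalRing.maximalIdeal ℤ_[p]).map (AdjoinRoot.of f) := by
    rw [hΦ, PadicInt.maximalIdeal_eq_span_p, Ideal.map_span, Set.image_singleton]
  have hf : f.map (IsLocalRing.residue ℤ_[p]) = X ^ p ^ i - C 1 := by simp [f]
  rw [hroot, Nat.card_congr (AdjoinRoot.quotSpanMkEquivComm _ f).toEquiv, hspan,
    Nat.card_congr (AdjoinRoot.quotEquivQuotMap f _).toEquiv]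
  change Nat.card (AdjoinRoot (f.map (IsLocalRing.residue ℤ_[p]))) = _
  rw [AdjoinRoot.natCard_eq_pow_natDegree (hf ▸ monic_X_pow_sub_C _ (NeZero.ne _)), hf,
    natDegree_X_pow_sub_C, PadicInt.natCard_residueField]

theorem RingEquiv.isSMulRegular_congr {A B : Type*} [Semiring A] [Semiring B] (e : A ≃+* B)
    (x : A) : IsSMulRegular A x ↔ IsSMulRegular B (e x) :=
  e.toEquiv.isSMulRegular_congr fun y => map_mul e x y

section GroupRingOfCyclicPGroup

variable (p : ℕ) [Fact p.Prime]

theorem genElt_pow_card (n : ℕ) : genElt p n ^ p ^ n = 1 := by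
  have : cycGen p n ^ p ^ n = 1 := by simpa using pow_card_eq_one' (x := cycGen p n)
  rw [genElt, ← map_pow, this, map_one]

noncomputable def zpZetaEquivAdjoinRoot (n : ℕ) :
    ZpZeta p n n ≃ₐ[ℤ_[p]] AdjoinRoot (cyclotomic (p ^ n) ℤ_[p]) :=
  groupAlgebraQuotEquivAdjoinRoot _ (cyclotomic.dvd_X_pow_sub_one _ _)

theorem zpZetaEquivAdjoinRoot_algebraMap_genElt_pow_sub_one (n i : ℕ) :
    zpZetaEquivAdjoinRoot p n (algebraMap _ _ (genElt p n ^ p ^ i - 1)) =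
      AdjoinRoot.root (cyclotomic (p ^ n) ℤ_[p]) ^ p ^ i - 1 := by
  rw [map_sub, map_pow, map_one, map_sub, map_pow, map_one, Ideal.Quotient.algebraMap_eq]
  exact congrArg (· ^ p ^ i - 1) (groupAlgebraQuotEquivAdjoinRoot_mk_of _ _)

variable {p} {n i : ℕ}

theorem isSMulRegular_genElt_pow_sub_one (hi : i < n) :
    IsSMulRegular (ZpZeta p n n) (genElt p n ^ p ^ i - 1) := by
  obtain ⟨m, rfl⟩ : ∃ m, n = m + 1 := ⟨n - 1, by omega⟩
  rw [← isSMulRegular_algebraMap_iff (ZpZeta p (m + 1) (m + 1)),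
    (zpZetaEquivAdjoinRoot p _).toRingEquiv.isSMulRegular_congr, AlgEquiv.coe_ringEquiv,
    zpZetaEquivAdjoinRoot_algebraMap_genElt_pow_sub_one]
  exact isSMulRegular_root_pow_sub_one (by omega)

theorem natCard_zpZeta_quot_span_genElt_pow_sub_one (hi : i < n) :
    Nat.card (ZpZeta p n n ⧸
      Ideal.span {algebraMap (ZpG p n) (ZpZeta p n n) (genElt p n ^ p ^ i - 1)}) =
      p ^ p ^ i := by
  obtain ⟨m, rfl⟩ : ∃ m, n = m + 1 := ⟨n - 1, by omega⟩
  rw [Nat.card_congr (Ideal.quotientEquiv _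
      (Ideal.span {AdjoinRoot.root (cyclotomic (p ^ (m + 1)) ℤ_[p]) ^ p ^ i - 1})
      (zpZetaEquivAdjoinRoot p _).toRingEquiv ?_).toEquiv,
    natCard_quot_span_root_pow_sub_one (by omega)]
  rw [Ideal.map_span, Set.image_singleton]
  exact congrArg (fun x => Ideal.span {x})
    (zpZetaEquivAdjoinRoot_algebraMap_genElt_pow_sub_one p _ i).symm

end GroupRingOfCyclicPGroup

theorem stmt4_general (p n i : ℕ) [Fact p.Prime] (hi : i < n) :
    Subsingleton (H2el (ZpG p n) (ZpZeta p n n) (genElt p n ^ p ^ i) (p ^ (n - i)))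
      ∧ Nonempty (H1el (ZpG p n) (ZpZeta p n n) (genElt p n ^ p ^ i) (p ^ (n - i))
          ≃+ (ZpZeta p n n ⧸
              Ideal.span {(Ideal.Quotient.mk
                (Ideal.span {Polynomial.aeval (genElt p n) (Polynomial.cyclotomic (p ^ n) ℤ_[p])})
                (genElt p n)) ^ p ^ i - 1}))
      ∧ Nat.card (H1el (ZpG p n) (ZpZeta p n n) (genElt p n ^ p ^ i) (p ^ (n - i))) = p ^ p ^ i
      ∧ chiEl (ZpG p n) (ZpZeta p n n) p (genElt p n ^ p ^ i) (p ^ (n - i)) = -(p ^ i : ℤ) := by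
  have hak : (genElt p n ^ p ^ i) ^ p ^ (n - i) = 1 := by
    rw [← pow_mul, ← pow_add, Nat.add_sub_cancel' hi.le, genElt_pow_card p]
  have hreg := isSMulRegular_genElt_pow_sub_one (p := p) hi
  have hζ : algebraMap _ (ZpZeta p n n) (genElt p n ^ p ^ i - 1) =
      Ideal.Quotient.mk _ (genElt p n) ^ p ^ i - 1 := by
    rw [map_sub, map_pow, map_one, Ideal.Quotient.algebraMap_eq]
  have E : H1el (ZpG p n) (ZpZeta p n n) (genElt p n ^ p ^ i) (p ^ (n - i)) ≃+
      (ZpZeta p n n ⧸ Ideal.span {Ideal.Quotient.mk _ (genElt p n) ^ p ^ i - 1}) :=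
    hζ ▸ (H1elEquivQuotSpan hak hreg).toAddEquiv
  have hH1 : Nat.card (H1el (ZpG p n) (ZpZeta p n n) (genElt p n ^ p ^ i) (p ^ (n - i))) =
      p ^ p ^ i :=
    (Nat.card_congr (H1elEquivQuotSpan hak hreg).toEquiv).trans
      (natCard_zpZeta_quot_span_genElt_pow_sub_one hi)
  have hH2 := subsingleton_H2el_of_isSMulRegular (k := p ^ (n - i)) hreg
  refine ⟨hH2, ⟨E⟩, hH1, ?_⟩
  rw [chiEl, hH1, Nat.card_of_subsingleton 0, padicValNat_one_right, padicValNat.prime_pow]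
  simp

/-- For `N_i = ⟨g^{p^i}⟩ ≤ G = ⟨g⟩ ≅ Z/(p^n)` acting on `ℤ_p[ζ_{p^n}] = ℤ_pG/(Φ_{p^n}(g))`
(so `g` acts as multiplication by `ζ_{p^n}`): `Ĥ²(N_i, ℤ_p[ζ_{p^n}]) = 0`,
`Ĥ¹(N_i, ℤ_p[ζ_{p^n}]) ≅ ℤ_p[ζ_{p^n}]/(ζ_{p^n}^{p^i} - 1)` has order `p^{p^i}`, and
consequently `χ(N_i, ℤ_p[ζ_{p^n}]) = -p^i`. -/
theorem stmt4 (p n i : ℕ) [Fact p.Prime] (hn : 1 ≤ n) (hi : i < n) :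
    Subsingleton (H2el (ZpG p n) (ZpZeta p n n) (genElt p n ^ p ^ i) (p ^ (n - i)))
      ∧ Nonempty (H1el (ZpG p n) (ZpZeta p n n) (genElt p n ^ p ^ i) (p ^ (n - i))
          ≃+ (ZpZeta p n n ⧸
              Ideal.span {(Ideal.Quotient.mk
                (Ideal.span {Polynomial.aeval (genElt p n) (Polynomial.cyclotomic (p ^ n) ℤ_[p])})
                (genElt p n)) ^ p ^ i - 1}))
      ∧ Nat.card (H1el (ZpG p n) (ZpZeta p n n) (genElt p n ^ p ^ i) (p ^ (n - i))) = p ^ p ^ i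
      ∧ chiEl (ZpG p n) (ZpZeta p n n) p (genElt p n ^ p ^ i) (p ^ (n - i)) = -(p ^ i : ℤ) :=
  stmt4_general p n i hi
end
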